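/- For the 8-dimensional Lie algebra L_{8,17}^{-1} with nonzero brackets [X_1,X_2]=2X_2, [X_1,X_3]=-2X_3, [X_2,X_3]=X_1, [X_1,X_4]=X_4, [X_1,X_5]=-X_5, [X_2,X_5]=X_4, [X_3,X_4]=X_5, [X_1,X_6]=X_6, [X_1,X_7]=-X_7, [X_2,X_7]=X_6, [X_3,X_6]=X_7, [X_4,X_8]=X_4, [X_5,X_8]=X_5, [X_6,X_8]=-X_6, [X_7,X_8]=-X_7, the polynomials I_1 = x_4x_7 - x_5x_6 and I_2 = x_1(x_4x_7+x_5x_6) + 2x_2x_5x_7 - 2x_3x_4x_6 + x_8(x_4x_7 - x_5x_6) are annihilated by all coadjoint vector fields X̂_i = C_{ij}^k x_k ∂/∂x_j, i = 1,…,8. -/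

import Mathlib

open scoped BigOperators

noncomputable def Xhat {n : ℕ} (C : Fin n → Fin n → Fin n → ℝ)
    (F : (Fin n → ℝ) → ℝ) (i : Fin n) (x : Fin n → ℝ) : ℝ :=
  ∑ j, ∑ k, C i j k * x k * fderiv ℝ F x (Pi.single j 1)

def C817 : Fin 8 → Fin 8 → Fin 8 → ℝ := fun i j k =>
  match i.1, j.1, k.1 with
  | 0, 1, 1 => 2
  | 1, 0, 1 => -2
  | 0, 2, 2 => -2
  | 2, 0, 2 => 2
  | 1, 2, 0 => 1
  | 2, 1, 0 => -1
  | 0, 3, 3 => 1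
  | 3, 0, 3 => -1
  | 0, 4, 4 => -1
  | 4, 0, 4 => 1
  | 1, 4, 3 => 1
  | 4, 1, 3 => -1
  | 2, 3, 4 => 1
  | 3, 2, 4 => -1
  | 0, 5, 5 => 1
  | 5, 0, 5 => -1
  | 0, 6, 6 => -1
  | 6, 0, 6 => 1
  | 1, 6, 5 => 1
  | 6, 1, 5 => -1
  | 2, 5, 6 => 1
  | 5, 2, 6 => -1
  | 3, 7, 3 => 1
  | 7, 3, 3 => -1
  | 4, 7, 4 => 1
  | 7, 4, 4 => -1
  | 5, 7, 5 => -1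
  | 7, 5, 5 => 1
  | 6, 7, 6 => -1
  | 7, 6, 6 => 1
  | _, _, _ => 0

/-
`X̂ᵢ F (x)` is the derivative of `F` at `x` along the coadjoint vector `(Cᵢⱼᵏ xₖ)ⱼ`, so by the
Leibniz rule each invariance statement is a polynomial identity, checked generator by generator
from the structure constants.
-/

def coadjointVector {n : ℕ} (C : Fin n → Fin n → Fin n → ℝ) (i : Fin n) (x : Fin n → ℝ) :
    Fin n → ℝ :=
  fun j => ∑ k, C i j k * x k

theorem LinearMap.sum_smul_apply_single {ι R M : Type*} [Fintype ι] [DecidableEq ι] [Semiring R]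
    [AddCommMonoid M] [Module R M] (f : (ι → R) →ₗ[R] M) (a : ι → R) :
    ∑ i, a i • f (Pi.single i 1) = f a := by
  conv_rhs => rw [← Finset.univ_sum_single a, map_sum]
  simp_rw [← map_smul, ← Pi.single_smul', smul_eq_mul, mul_one]

theorem Xhat_eq_fderiv_coadjointVector {n : ℕ} (C : Fin n → Fin n → Fin n → ℝ)
    (F : (Fin n → ℝ) → ℝ) (i : Fin n) (x : Fin n → ℝ) :
    Xhat C F i x = fderiv ℝ F x (coadjointVector C i x) := by
  simp only [Xhat, ← Finset.sum_mul]
  exact (fderiv ℝ F x).toLinearMap.sum_smul_apply_single _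

theorem fderiv_eval_apply {𝕜 ι : Type*} [NontriviallyNormedField 𝕜] [Fintype ι] (i : ι)
    (x v : ι → 𝕜) : fderiv 𝕜 (fun y : ι → 𝕜 => y i) x v = v i := by
  rw [(hasFDerivAt_apply i x).fderiv]
  rfl

namespace L817

/-- Coordinates are indexed from `0`: the paper's `x₄ x₇ - x₅ x₆`. -/
def I₁ (y : Fin 8 → ℝ) : ℝ := y 3 * y 6 - y 4 * y 5

def I₂ (y : Fin 8 → ℝ) : ℝ :=
  y 0 * (y 3 * y 6 + y 4 * y 5) + 2 * y 1 * y 4 * y 6 - 2 * y 2 * y 3 * y 5 + y 7 * I₁ y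

@[fun_prop]
theorem differentiable_I₁ : Differentiable ℝ I₁ := by
  unfold I₁
  fun_prop

theorem fderiv_I₁_apply (x v : Fin 8 → ℝ) :
    fderiv ℝ I₁ x v = v 3 * x 6 + x 3 * v 6 - v 4 * x 5 - x 4 * v 5 := by
  unfold I₁
  simp (disch := fun_prop) [fderiv_fun_sub, fderiv_fun_mul, fderiv_eval_apply]
  ring

theorem fderiv_I₂_apply (x v : Fin 8 → ℝ) :
    fderiv ℝ I₂ x v =
      v 0 * (x 3 * x 6 + x 4 * x 5) + x 0 * (v 3 * x 6 + x 3 * v 6 + v 4 * x 5 + x 4 * v 5)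
        + 2 * (v 1 * x 4 * x 6 + x 1 * v 4 * x 6 + x 1 * x 4 * v 6)
        - 2 * (v 2 * x 3 * x 5 + x 2 * v 3 * x 5 + x 2 * x 3 * v 5)
        + v 7 * I₁ x + x 7 * fderiv ℝ I₁ x v := by
  unfold I₂
  simp (disch := fun_prop) [fderiv_fun_sub, fderiv_fun_add, fderiv_fun_mul, fderiv_eval_apply]
  ring

set_option maxHeartbeats 1000000 in
theorem Xhat_I₁_eq_zero (i : Fin 8) (x : Fin 8 → ℝ) : Xhat C817 I₁ i x = 0 := by
  rw [Xhat_eq_fderiv_coadjointVector, fderiv_I₁_apply]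
  fin_cases i <;> simp [coadjointVector, C817, Fin.sum_univ_eight]

set_option maxHeartbeats 4000000 in
theorem Xhat_I₂_eq_zero (i : Fin 8) (x : Fin 8 → ℝ) : Xhat C817 I₂ i x = 0 := by
  rw [Xhat_eq_fderiv_coadjointVector, fderiv_I₂_apply, fderiv_I₁_apply]
  fin_cases i <;> simp [coadjointVector, C817, I₁, Fin.sum_univ_eight] <;> ring

end L817

theorem L817_invariants :
    ∀ (i : Fin 8) (x : Fin 8 → ℝ),
      Xhat C817 (fun y => y 3 * y 6 - y 4 * y 5) i x = 0 ∧
      Xhat C817 (fun y => y 0 * (y 3 * y 6 + y 4 * y 5) + 2 * y 1 * y 4 * y 6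
        - 2 * y 2 * y 3 * y 5 + y 7 * (y 3 * y 6 - y 4 * y 5)) i x = 0 :=
  fun i x => ⟨L817.Xhat_I₁_eq_zero i x, L817.Xhat_I₂_eq_zero i x⟩
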